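/- arXiv:0706.1785 — 2 statements merged into one kernel-verified Lean document; each statement's English description precedes it below -/
import Mathlib

section
/- (Maximum stabilizer dimension) For every nonzero n-qubit state vector ψ, 2 · dim_ℝ K_ψ ≤ 3n, i.e. dim_ℝ K_ψ ≤ 3n/2. -/
open scoped Matrix

noncomputable section

/-- The `n`-qubit Hilbert space `(ℂ²)^{⊗n}`, realized as functions `(Fin n → Fin 2) → ℂ`. -/
abbrev QState (n : ℕ) := (Fin n → Fin 2) → ℂ

/-- The ambient real vector space `ℝ × (Fin n → M₂(ℂ))` containing `u(1) ⊕ su(2)^n`. -/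
abbrev GV (n : ℕ) := ℝ × (Fin n → Matrix (Fin 2) (Fin 2) ℂ)

/-- `su(2)`: traceless skew-Hermitian `2 × 2` complex matrices, as a real subspace. -/
def su2 : Submodule ℝ (Matrix (Fin 2) (Fin 2) ℂ) where
  carrier := {X | Xᴴ = -X ∧ X.trace = 0}
  add_mem' := by
    rintro X Y ⟨hX1, hX2⟩ ⟨hY1, hY2⟩
    exact ⟨by rw [Matrix.conjTranspose_add, hX1, hY1, neg_add],
           by rw [Matrix.trace_add, hX2, hY2, add_zero]⟩
  zero_mem' := ⟨by simp, by simp⟩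
  smul_mem' := by
    rintro r X ⟨hX1, hX2⟩
    exact ⟨by rw [Matrix.conjTranspose_smul, hX1, star_trivial, smul_neg],
           by rw [Matrix.trace_smul, hX2, smul_zero]⟩

/-- The Lie algebra `g = u(1) ⊕ su(2)^n` as a real subspace of `GV n`. -/
def gSub (n : ℕ) : Submodule ℝ (GV n) :=
  (⊤ : Submodule ℝ ℝ).prod (Submodule.pi Set.univ fun _ => su2)

/-- `g_S`: elements `(0, X)` of `g` with `X j = 0` for `j ∉ S`. -/
def gS {n : ℕ} (S : Set (Fin n)) : Submodule ℝ (GV n) :=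
  (⊥ : Submodule ℝ ℝ).prod (Submodule.pi Set.univ fun j =>
    letI := Classical.dec (j ∈ S)
    if j ∈ S then su2 else ⊥)

/-- `ḡ_S`: elements `(t, X)` of `g` with `X j = 0` for `j ∈ S`. -/
def gBar {n : ℕ} (S : Set (Fin n)) : Submodule ℝ (GV n) :=
  (⊤ : Submodule ℝ ℝ).prod (Submodule.pi Set.univ fun j =>
    letI := Classical.dec (j ∈ S)
    if j ∈ S then (⊥ : Submodule ℝ (Matrix (Fin 2) (Fin 2) ℂ)) else su2)

/-- The projection `P_j : g → su(2)`, `(t, X) ↦ X j`. -/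
def Pj {n : ℕ} (j : Fin n) : GV n →ₗ[ℝ] Matrix (Fin 2) (Fin 2) ℂ :=
  (LinearMap.proj j).comp (LinearMap.snd ℝ ℝ (Fin n → Matrix (Fin 2) (Fin 2) ℂ))

/-- Apply the matrix `X` to qubit `j` of the state `ψ`. -/
def applySingle {n : ℕ} (j : Fin n) (X : Matrix (Fin 2) (Fin 2) ℂ) (ψ : QState n) : QState n :=
  fun I => ∑ k : Fin 2, X (I j) k * ψ (Function.update I j k)

/-- The infinitesimal local-unitary action: `dΦ_ψ(t, X) = i t ψ + Σ_j X_j ψ`. -/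
def dPhi {n : ℕ} (ψ : QState n) : GV n →ₗ[ℝ] QState n where
  toFun x := fun I => Complex.I * (x.1 : ℂ) * ψ I + ∑ j, applySingle j (x.2 j) ψ I
  map_add' x y := by
    funext I
    simp only [applySingle, Prod.fst_add, Prod.snd_add, Pi.add_apply, Matrix.add_apply,
      Complex.ofReal_add, add_mul, Finset.sum_add_distrib]
    ring
  map_smul' r x := by
    funext I
    simp only [applySingle, Prod.smul_fst, Prod.smul_snd, Pi.smul_apply, Matrix.smul_apply,
      smul_eq_mul, Complex.real_smul, Complex.ofReal_mul, RingHom.id_apply,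
      Finset.mul_sum, mul_add]
    congr 1
    · ring
    · refine Finset.sum_congr rfl fun j _ => Finset.sum_congr rfl fun k _ => by ring

/-- The stabilizer subalgebra `K_ψ = {(t,X) ∈ g : dΦ_ψ(t,X) = 0}`. -/
def stab {n : ℕ} (ψ : QState n) : Submodule ℝ (GV n) :=
  gSub n ⊓ LinearMap.ker (dPhi ψ)

/-- The componentwise bracket on `g` (zero in the `u(1)` component). -/
def gBracket {n : ℕ} (x y : GV n) : GV n :=
  (0, fun j => ⁅x.2 j, y.2 j⁆)

/-- An `su(2)` block for `ψ`: a set `S` of qubits with `dim (K_ψ ∩ g_S) > 1` and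
`dim (K_ψ ∩ g_{S'}) = 0` for every proper subset `S' ⊊ S`. -/
def Su2Block {n : ℕ} (ψ : QState n) (S : Set (Fin n)) : Prop :=
  1 < Module.finrank ℝ ↥(stab ψ ⊓ gS S) ∧
  ∀ S' : Set (Fin n), S' ⊂ S → Module.finrank ℝ ↥(stab ψ ⊓ gS S') = 0

/-- The union `B` of all `su(2)` blocks for `ψ`. -/
def blockUnion {n : ℕ} (ψ : QState n) : Set (Fin n) :=
  {q | ∃ S : Set (Fin n), Su2Block ψ S ∧ q ∈ S}

/-- The number `p` of `su(2)` blocks for `ψ`. -/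
def blockCount {n : ℕ} (ψ : QState n) : ℕ :=
  {S : Set (Fin n) | Su2Block ψ S}.ncard

/-- `ψ` factors across the set `S` of qubits: `ψ(I) = φ(I|_S) · χ(I|_{Sᶜ})`. -/
def FactorsAcross {n : ℕ} (ψ : QState n) (S : Set (Fin n)) : Prop :=
  ∃ (φ : (↥S → Fin 2) → ℂ) (χ : (↥(Sᶜ) → Fin 2) → ℂ),
    ∀ I : Fin n → Fin 2, ψ I = φ (fun j => I j.1) * χ (fun j => I j.1)

/-- `ψ` is a nonproduct state: it factors across no proper nonempty set of qubits. -/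
def IsNonproduct {n : ℕ} (ψ : QState n) : Prop :=
  ∀ S : Set (Fin n), S ≠ ∅ → S ≠ Set.univ → ¬ FactorsAcross ψ S

/-- `ψ` has a single-qubit factor. -/
def HasSingleQubitFactor {n : ℕ} (ψ : QState n) : Prop :=
  ∃ j : Fin n, FactorsAcross ψ {j}

/-- Apply the local unitary (or just local linear) transformation `⊗_j U_j` to `ψ`. -/
def luApply {n : ℕ} (U : Fin n → Matrix (Fin 2) (Fin 2) ℂ) (ψ : QState n) : QState n :=
  fun I => ∑ J : Fin n → Fin 2, (∏ j, U j (I j) (J j)) * ψ J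

/-- Local unitary equivalence of `n`-qubit states. -/
def LUEquiv {n : ℕ} (ψ ψ' : QState n) : Prop :=
  ∃ U : Fin n → Matrix (Fin 2) (Fin 2) ℂ,
    (∀ j, U j ∈ Matrix.unitaryGroup (Fin 2) ℂ) ∧ ψ' = luApply U ψ

/-- The two-qubit singlet state `φ(a,b) = δ_{a0} δ_{b1} − δ_{a1} δ_{b0}`. -/
def singletFn : Fin 2 → Fin 2 → ℂ := fun a b =>
  if a = 0 ∧ b = 1 then 1 else if a = 1 ∧ b = 0 then -1 else 0

/-- `ψ` has a singlet factor: it is LU-equivalent to a state that factors across a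
two-element set of qubits, with the two-qubit factor being the singlet. -/
def HasSingletFactor {n : ℕ} (ψ : QState n) : Prop :=
  ∃ ψ' : QState n, LUEquiv ψ ψ' ∧ ∃ j k : Fin n, j ≠ k ∧
    ∃ χ : (↥(({j, k} : Set (Fin n))ᶜ) → Fin 2) → ℂ,
      ∀ I : Fin n → Fin 2, ψ' I = singletFn (I j) (I k) * χ (fun q => I q.1)

/-- The matrix `A = diag(i, −i) ∈ su(2)`. -/
def matA : Matrix (Fin 2) (Fin 2) ℂ := !![Complex.I, 0; 0, -Complex.I]

/-- The generalized `n`-qubit GHZ state `α|0…0⟩ + β|1…1⟩`. -/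
def ghz (n : ℕ) (α β : ℂ) : QState n := fun I =>
  if ∀ j, I j = 0 then α else if ∀ j, I j = 1 then β else 0

/-!
The local action is a representation of `g`, so `K_ψ` is a Lie subalgebra of `g`, and the
form `t s + Σ_k Re tr (X_kᴴ Y_k)` is positive definite and invariant on `g`. Hence
`K_ψ = Z ⊕ S` with `Z` the center and `S = Zᗮ` center-free, and `S` splits orthogonally into
minimal ideals. A minimal ideal `I` projects injectively into `su(2)` on every qubit it
touches, so `dim I ≤ 3`; it touches at least two qubits, because an element of `su(2)` that
stabilizes `ψ` on a single qubit kills a nonzero vector and so vanishes. A center-free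
algebra projects onto a subspace of `su(2)` of dimension `≥ 2` on each qubit it touches, and
only `0` commutes with such a subspace; so the ideals touch disjoint sets of qubits, which
gives `2 dim S ≤ 3 |T|` for the set `T` of qubits touched by `S`. Likewise `Z` vanishes on `T`,
and on each other qubit it projects onto a commuting, hence at most one-dimensional, subspace
of `su(2)`; as `ψ ≠ 0`, an element of `K_ψ` is determined by its `su(2)ⁿ` part, so
`dim Z ≤ n - |T|`.
-/

open Module

-- The commutator bracket of the ring `GV n = ℝ × M₂(ℂ)ⁿ` is the bracket of `g`: its `ℝ`
-- component `t s - s t` vanishes.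
attribute [local instance] LieRing.ofAssociativeRing

section OrthogonalSplitting

variable {K V : Type*} [Field K] [AddCommGroup V] [Module K V] {Φ : LinearMap.BilinForm K V}

lemma LinearMap.BilinForm.disjoint_orthogonal_of_anisotropic
    (hΦ : ∀ x, Φ x x = 0 → x = 0) (B : Submodule K V) : Disjoint B (Φ.orthogonal B) :=
  Submodule.disjoint_def.2 fun x hx hx' => hΦ x (hx' x hx)

variable [FiniteDimensional K V]

lemma LinearMap.BilinForm.sup_inf_orthogonal (hΦs : Φ.IsSymm) (hΦ : ∀ x, Φ x x = 0 → x = 0)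
    {A B : Submodule K V} (hBA : B ≤ A) : B ⊔ A ⊓ Φ.orthogonal B = A := by
  have hc := (LinearMap.BilinForm.isCompl_orthogonal_iff_disjoint hΦs.isRefl).2
    (Φ.disjoint_orthogonal_of_anisotropic hΦ B)
  rw [inf_comm, ← sup_inf_assoc_of_le _ hBA, hc.sup_eq_top, top_inf_eq]

lemma LinearMap.BilinForm.finrank_add_finrank_inf_orthogonal (hΦs : Φ.IsSymm)
    (hΦ : ∀ x, Φ x x = 0 → x = 0) {A B : Submodule K V} (hBA : B ≤ A) :
    finrank K B + finrank K (A ⊓ Φ.orthogonal B : Submodule K V) = finrank K A := by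
  have hdisj : B ⊓ (A ⊓ Φ.orthogonal B) = ⊥ :=
    ((Φ.disjoint_orthogonal_of_anisotropic hΦ B).mono_right inf_le_right).eq_bot
  rw [← Submodule.finrank_sup_add_finrank_inf_eq, hdisj, finrank_bot, add_zero,
    Φ.sup_inf_orthogonal hΦs hΦ hBA]

end OrthogonalSplitting

namespace Submodule

variable {K L : Type*} [Field K] [LieRing L] [LieAlgebra K L]

def IsLieClosed (S : Submodule K L) : Prop :=
  ∀ x ∈ S, ∀ y ∈ S, ⁅x, y⁆ ∈ S

structure IsLieIdealOf (I S : Submodule K L) : Prop where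
  le : I ≤ S
  lie_mem : ∀ s ∈ S, ∀ x ∈ I, ⁅s, x⁆ ∈ I

def IsCenterFree (S : Submodule K L) : Prop :=
  ∀ x ∈ S, (∀ y ∈ S, ⁅x, y⁆ = 0) → x = 0

def lieCenter (S : Submodule K L) : Submodule K L where
  carrier := {x | x ∈ S ∧ ∀ y ∈ S, ⁅x, y⁆ = 0}
  add_mem' := fun ⟨ha, ha'⟩ ⟨hb, hb'⟩ =>
    ⟨S.add_mem ha hb, fun y hy => by rw [add_lie, ha' y hy, hb' y hy, add_zero]⟩
  zero_mem' := ⟨S.zero_mem, fun y _ => zero_lie y⟩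
  smul_mem' := fun r _ ⟨ha, ha'⟩ =>
    ⟨S.smul_mem r ha, fun y hy => by rw [smul_lie, ha' y hy, smul_zero]⟩

lemma IsLieIdealOf.isLieClosed {I S : Submodule K L} (hI : I.IsLieIdealOf S) : I.IsLieClosed :=
  fun x hx y hy => hI.lie_mem x (hI.le hx) y hy

lemma lieCenter_isLieIdealOf (S : Submodule K L) : S.lieCenter.IsLieIdealOf S where
  le _ hx := hx.1
  lie_mem s hs _ hx := by
    rw [← lie_skew, hx.2 s hs, neg_zero]
    exact S.lieCenter.zero_mem

lemma IsLieIdealOf.inf_ker {I S : Submodule K L} (hI : I.IsLieIdealOf S) {M : Type*}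
    [AddCommGroup M] [Module K M] (f : L →ₗ[K] M)
    (hf : ∀ s ∈ S, ∀ x ∈ I, f x = 0 → f ⁅s, x⁆ = 0) : (I ⊓ LinearMap.ker f).IsLieIdealOf S where
  le := inf_le_left.trans hI.le
  lie_mem s hs x hx := ⟨hI.lie_mem s hs x hx.1, hf s hs x hx.1 hx.2⟩

lemma IsLieIdealOf.inf_orthogonal {I S : Submodule K L} (hI : I.IsLieIdealOf S)
    (hS : S.IsLieClosed) {Φ : LinearMap.BilinForm K L}
    (hΦ : ∀ s ∈ S, ∀ x y, Φ ⁅s, x⁆ y = -Φ x ⁅s, y⁆) :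
    (S ⊓ Φ.orthogonal I).IsLieIdealOf S where
  le := inf_le_left
  lie_mem s hs x hx := ⟨hS s hs x hx.1, fun i hi => by
    rw [← neg_eq_zero, ← hΦ s hs, hx.2 _ (hI.lie_mem s hs i hi)]⟩

lemma IsLieIdealOf.lie_eq_zero_of_disjoint {I J S : Submodule K L} (hI : I.IsLieIdealOf S)
    (hJ : J.IsLieIdealOf S) (hIJ : Disjoint I J) {a b : L} (ha : a ∈ I) (hb : b ∈ J) :
    ⁅a, b⁆ = 0 := by
  refine Submodule.disjoint_def.1 hIJ _ ?_ (hJ.lie_mem a (hI.le ha) b hb)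
  rw [← lie_skew]
  exact I.neg_mem (hI.lie_mem b (hJ.le hb) a ha)

lemma IsLieIdealOf.lie_eq_zero_of_sup_eq {A B S : Submodule K L} (hA : A.IsLieIdealOf S)
    (hB : B.IsLieIdealOf S) (hAB : Disjoint A B) (hS : A ⊔ B = S) {x : L} (hx : x ∈ A)
    (hxA : ∀ a ∈ A, ⁅x, a⁆ = 0) : ∀ y ∈ S, ⁅x, y⁆ = 0 := by
  intro y hy
  rw [← hS] at hy
  obtain ⟨a, ha, b, hb, rfl⟩ := mem_sup.1 hy
  rw [lie_add, hxA a ha, hA.lie_eq_zero_of_disjoint hB hAB hx hb, add_zero]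

lemma IsCenterFree.of_sup_eq {A B S : Submodule K L} (hSc : S.IsCenterFree)
    (hA : A.IsLieIdealOf S) (hB : B.IsLieIdealOf S) (hAB : Disjoint A B) (hS : A ⊔ B = S) :
    A.IsCenterFree :=
  fun x hx hxA => hSc x (hA.le hx) (hA.lie_eq_zero_of_sup_eq hB hAB hS hx hxA)

lemma exists_minimal_isLieIdealOf [FiniteDimensional K L] {S : Submodule K L}
    (hS : S.IsLieClosed) (h : S ≠ ⊥) :
    ∃ I : Submodule K L, I.IsLieIdealOf S ∧ I ≠ ⊥ ∧
      ∀ J : Submodule K L, J.IsLieIdealOf S → J ≤ I → J = ⊥ ∨ J = I := by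
  obtain ⟨I, ⟨hI, hI0⟩, hmin⟩ := (measure fun I : Submodule K L => finrank K I).wf.has_min
    {I | I.IsLieIdealOf S ∧ I ≠ ⊥} ⟨S, ⟨le_rfl, hS⟩, h⟩
  exact ⟨I, hI, hI0, fun J hJ hJI => or_iff_not_imp_left.2 fun hJ0 =>
    eq_of_le_of_finrank_le hJI (not_lt.1 (hmin J ⟨hJ, hJ0⟩))⟩

lemma lie_eq_zero_of_finrank_le_one {V : Submodule K L} [FiniteDimensional K V]
    (hV : finrank K V ≤ 1) {a b : L} (ha : a ∈ V) (hb : b ∈ V) : ⁅a, b⁆ = 0 := by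
  obtain ⟨v, hv⟩ := finrank_le_one_iff.1 hV
  obtain ⟨c, hc⟩ := hv ⟨a, ha⟩
  obtain ⟨d, hd⟩ := hv ⟨b, hb⟩
  rw [show a = c • (v : L) from congrArg Subtype.val hc.symm,
    show b = d • (v : L) from congrArg Subtype.val hd.symm, smul_lie, lie_smul, lie_self,
    smul_zero, smul_zero]

section InvariantForm

variable [FiniteDimensional K L] {Φ : LinearMap.BilinForm K L} {S : Submodule K L}

/-- `S = [S, S]`: by invariance, `S ⊓ [S, S]ᗮ` is central. -/
lemma IsCenterFree.le_ker_of_lie (hS : S.IsLieClosed) (hSc : S.IsCenterFree) (hΦs : Φ.IsSymm)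
    (hΦ : ∀ x, Φ x x = 0 → x = 0) (hinv : ∀ s ∈ S, ∀ x y, Φ ⁅s, x⁆ y = -Φ x ⁅s, y⁆)
    {M : Type*} [AddCommGroup M] [Module K M] (f : L →ₗ[K] M)
    (hf : ∀ x ∈ S, ∀ y ∈ S, f ⁅x, y⁆ = 0) : S ≤ LinearMap.ker f := by
  set D := span K (Set.image2 (fun x y => ⁅x, y⁆) (S : Set L) (S : Set L))
  have hDS : D ≤ S := span_le.2 <| Set.image2_subset_iff.2 hS
  have hD : S ⊓ Φ.orthogonal D = ⊥ := by
    refine (Submodule.eq_bot_iff _).2 fun x hx => hSc x hx.1 fun y hy => ?_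
    have hw : Φ ⁅y, x⁆ ⁅y, x⁆ = 0 := by
      rw [hinv y hy, hΦs.eq, hx.2 _ (subset_span (Set.mem_image2_of_mem hy (hS y hy x hx.1))),
        neg_zero]
    rw [← lie_skew, hΦ _ hw, neg_zero]
  rw [← Φ.sup_inf_orthogonal hΦs hΦ hDS, hD, sup_bot_eq]
  exact span_le.2 <| Set.image2_subset_iff.2 hf

lemma isCenterFree_inf_orthogonal_lieCenter (hS : S.IsLieClosed) (hΦs : Φ.IsSymm)
    (hΦ : ∀ x, Φ x x = 0 → x = 0) (hinv : ∀ s ∈ S, ∀ x y, Φ ⁅s, x⁆ y = -Φ x ⁅s, y⁆) :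
    (S ⊓ Φ.orthogonal S.lieCenter).IsCenterFree := by
  intro x hx hxc
  have hZ := S.lieCenter_isLieIdealOf
  have hdisj : Disjoint (S ⊓ Φ.orthogonal S.lieCenter) S.lieCenter :=
    (Φ.disjoint_orthogonal_of_anisotropic hΦ _).symm.mono_left inf_le_right
  have hxZ : x ∈ S.lieCenter := ⟨hx.1, (hZ.inf_orthogonal hS hinv).lie_eq_zero_of_sup_eq hZ
    hdisj (by rw [sup_comm, Φ.sup_inf_orthogonal hΦs hΦ hZ.le]) hx hxc⟩
  exact disjoint_def.1 (Φ.disjoint_orthogonal_of_anisotropic hΦ _) x hxZ hx.2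

end InvariantForm

end Submodule

section SU2

open Complex ComplexConjugate

variable {X Y : Matrix (Fin 2) (Fin 2) ℂ}

lemma su2_apply_one_one (h : X ∈ su2) : X 1 1 = -X 0 0 := by
  have := h.2
  rw [Matrix.trace_fin_two] at this
  linear_combination this

lemma su2_apply_one_zero (h : X ∈ su2) : X 1 0 = -conj (X 0 1) := by
  simpa [Matrix.conjTranspose_apply] using congrArg conj (congrFun (congrFun h.1 0) 1)

lemma su2_conj_apply_zero_zero (h : X ∈ su2) : conj (X 0 0) = -X 0 0 := by
  simpa [Matrix.conjTranspose_apply] using congrFun (congrFun h.1 0) 0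

lemma su2_eq_zero_of_apply (h : X ∈ su2) (h0 : X 0 0 = 0) (h1 : X 0 1 = 0) : X = 0 := by
  ext i j
  fin_cases i <;> fin_cases j <;> simp [h0, h1, su2_apply_one_one h, su2_apply_one_zero h]

lemma su2_det (h : X ∈ su2) : X.det = (normSq (X 0 0) + normSq (X 0 1) : ℝ) := by
  rw [Matrix.det_fin_two, su2_apply_one_one h, su2_apply_one_zero h, ofReal_add,
    ← mul_conj, ← mul_conj, su2_conj_apply_zero_zero h]
  ring

lemma su2_eq_zero_of_mulVec_eq_zero (h : X ∈ su2) {u : Fin 2 → ℂ} (hu : u ≠ 0)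
    (hXu : X *ᵥ u = 0) : X = 0 := by
  have hdet : normSq (X 0 0) + normSq (X 0 1) = 0 := by
    exact_mod_cast (su2_det h).symm.trans (Matrix.exists_mulVec_eq_zero_iff.1 ⟨u, hu, hXu⟩)
  have h0 := normSq_nonneg (X 0 0)
  have h1 := normSq_nonneg (X 0 1)
  exact su2_eq_zero_of_apply h (normSq_eq_zero.1 (by linarith))
    (normSq_eq_zero.1 (by linarith))

lemma su2_lie_mem (hX : X ∈ su2) (hY : Y ∈ su2) : ⁅X, Y⁆ ∈ su2 := by
  refine ⟨?_, ?_⟩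
  · rw [Ring.lie_def, Matrix.conjTranspose_sub, Matrix.conjTranspose_mul,
      Matrix.conjTranspose_mul, hX.1, hY.1]
    noncomm_ring
  · rw [Ring.lie_def, Matrix.trace_sub, Matrix.trace_mul_comm, sub_self]

lemma su2_eq_smul_of_lie_eq_zero (hX : X ∈ su2) (hY : Y ∈ su2) (hX0 : X ≠ 0)
    (hXY : ⁅X, Y⁆ = 0) : ∃ r : ℝ, Y = r • X := by
  rw [Ring.lie_def, sub_eq_zero] at hXY
  have e00 : X 0 1 * conj (Y 0 1) = Y 0 1 * conj (X 0 1) := by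
    have := congrFun (congrFun hXY 0) 0
    simp only [Matrix.mul_apply, Fin.sum_univ_two, su2_apply_one_zero hX,
      su2_apply_one_zero hY] at this
    linear_combination -this
  have e01 : X 0 0 * Y 0 1 = Y 0 0 * X 0 1 := by
    have := congrFun (congrFun hXY 0) 1
    simp only [Matrix.mul_apply, Fin.sum_univ_two, su2_apply_one_one hX,
      su2_apply_one_one hY] at this
    linear_combination this / 2
  have of_apply : ∀ r : ℝ, Y 0 0 = r * X 0 0 → Y 0 1 = r * X 0 1 → Y = r • X := fun r h0 h1 =>
    sub_eq_zero.1 <| su2_eq_zero_of_apply (su2.sub_mem hY (su2.smul_mem r hX))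
      (by simp [h0]) (by simp [h1])
  by_cases ha : X 0 0 = 0
  · have hw : X 0 1 ≠ 0 := fun hw => hX0 (su2_eq_zero_of_apply hX ha hw)
    have ha' : Y 0 0 = 0 := by
      simpa [ha, hw] using e01
    have hq : conj (Y 0 1 / X 0 1) = Y 0 1 / X 0 1 := by
      rw [map_div₀, div_eq_div_iff (by simpa using hw) hw]
      linear_combination e00
    refine ⟨(Y 0 1 / X 0 1).re, of_apply _ ?_ ?_⟩
    · rw [ha, ha', mul_zero]
    · rw [conj_eq_iff_re.1 hq, div_mul_cancel₀ _ hw]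
  · have hq : conj (Y 0 0 / X 0 0) = Y 0 0 / X 0 0 := by
      rw [map_div₀, su2_conj_apply_zero_zero hX, su2_conj_apply_zero_zero hY, neg_div_neg_eq]
    refine ⟨(Y 0 0 / X 0 0).re, of_apply _ ?_ ?_⟩
    · rw [conj_eq_iff_re.1 hq, div_mul_cancel₀ _ ha]
    · rw [conj_eq_iff_re.1 hq, div_mul_eq_mul_div, eq_div_iff ha]
      linear_combination e01

lemma finrank_su2_le : finrank ℝ su2 ≤ 3 := by
  let f : Matrix (Fin 2) (Fin 2) ℂ →ₗ[ℝ] ℝ × ℂ :=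
    { toFun := fun X => ((X 0 0).im, X 0 1)
      map_add' := fun _ _ => rfl
      map_smul' := fun _ _ => by simp }
  have hf : Disjoint su2 (LinearMap.ker f) := by
    refine Submodule.disjoint_def.2 fun X hX hfX =>
      su2_eq_zero_of_apply hX ?_ (congrArg Prod.snd hfX)
    refine ext ?_ (congrArg Prod.fst hfX)
    have := congrArg re (su2_conj_apply_zero_zero hX)
    simp only [conj_re, neg_re] at this
    simp only [zero_re]
    linarith
  calc finrank ℝ su2 ≤ finrank ℝ (ℝ × ℂ) :=
        LinearMap.finrank_le_finrank_of_injective (LinearMap.injective_domRestrict_iff.2 hf)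
    _ = 3 := by rw [finrank_prod, finrank_self, finrank_real_complex]

lemma finrank_le_one_of_lie_eq_zero {V : Submodule ℝ (Matrix (Fin 2) (Fin 2) ℂ)} (hV : V ≤ su2)
    (hcomm : ∀ a ∈ V, ∀ b ∈ V, ⁅a, b⁆ = 0) : finrank ℝ V ≤ 1 := by
  rcases eq_or_ne V ⊥ with rfl | hV0
  · simp
  obtain ⟨a, ha, ha0⟩ := (Submodule.ne_bot_iff V).1 hV0
  have hle : V ≤ Submodule.span ℝ {a} := fun b hb => by
    obtain ⟨r, rfl⟩ := su2_eq_smul_of_lie_eq_zero (hV ha) (hV hb) ha0 (hcomm a ha b hb)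
    exact Submodule.smul_mem _ r (Submodule.mem_span_singleton_self a)
  exact (Submodule.finrank_mono hle).trans (finrank_span_singleton ha0).le

lemma su2_eq_zero_of_lie_eq_zero {V : Submodule ℝ (Matrix (Fin 2) (Fin 2) ℂ)} (hV : V ≤ su2)
    (hV2 : 2 ≤ finrank ℝ V) (hX : X ∈ su2) (hXV : ∀ a ∈ V, ⁅X, a⁆ = 0) : X = 0 := by
  by_contra hX0
  have hle : V ≤ Submodule.span ℝ {X} := fun b hb => by
    obtain ⟨r, rfl⟩ := su2_eq_smul_of_lie_eq_zero hX (hV hb) hX0 (hXV b hb)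
    exact Submodule.smul_mem _ r (Submodule.mem_span_singleton_self X)
  have := (Submodule.finrank_mono hle).trans (finrank_span_singleton hX0).le
  omega

end SU2

section LocalAction

variable {n : ℕ}

lemma GV.fst_lie (x y : GV n) : (⁅x, y⁆ : GV n).1 = 0 := by
  simp [Ring.lie_def, mul_comm]

lemma GV.snd_lie (x y : GV n) (j : Fin n) : (⁅x, y⁆ : GV n).2 j = ⁅x.2 j, y.2 j⁆ := rfl

def qubitOp (j : Fin n) (X : Matrix (Fin 2) (Fin 2) ℂ) : Module.End ℂ (QState n) where
  toFun := applySingle j X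
  map_add' φ χ := by
    funext I
    simp [applySingle, Finset.sum_add_distrib, mul_add]
  map_smul' c φ := by
    funext I
    simp only [applySingle, Pi.smul_apply, smul_eq_mul, RingHom.id_apply, Finset.mul_sum]
    exact Finset.sum_congr rfl fun k _ => by ring

lemma qubitOp_apply (j : Fin n) (X : Matrix (Fin 2) (Fin 2) ℂ) (ψ : QState n) :
    qubitOp j X ψ = applySingle j X ψ := rfl

lemma qubitOp_sub (j : Fin n) (X Y : Matrix (Fin 2) (Fin 2) ℂ) :
    qubitOp j (X - Y) = qubitOp (n := n) j X - qubitOp j Y := by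
  refine LinearMap.ext fun ψ => funext fun I => ?_
  simp [qubitOp_apply, applySingle, sub_mul, Finset.sum_sub_distrib]

lemma qubitOp_mul_qubitOp (j : Fin n) (X Y : Matrix (Fin 2) (Fin 2) ℂ) :
    qubitOp j X * qubitOp j Y = qubitOp (n := n) j (X * Y) := by
  refine LinearMap.ext fun ψ => funext fun I => ?_
  simp only [Module.End.mul_apply, qubitOp_apply, applySingle, Function.update_self,
    Function.update_idem, Finset.mul_sum, Matrix.mul_apply, Finset.sum_mul]
  rw [Finset.sum_comm]
  exact Finset.sum_congr rfl fun _ _ => Finset.sum_congr rfl fun _ _ => by ring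

lemma qubitOp_mul_qubitOp_of_ne {j k : Fin n} (h : j ≠ k) (X Y : Matrix (Fin 2) (Fin 2) ℂ) :
    qubitOp j X * qubitOp k Y = qubitOp (n := n) k Y * qubitOp j X := by
  refine LinearMap.ext fun ψ => funext fun I => ?_
  simp only [Module.End.mul_apply, qubitOp_apply, applySingle, Function.update_of_ne h,
    Function.update_of_ne h.symm, Finset.mul_sum]
  rw [Finset.sum_comm]
  exact Finset.sum_congr rfl fun a _ => Finset.sum_congr rfl fun b _ => by
    rw [Function.update_comm h]
    ring

def localOp (x : GV n) : Module.End ℂ (QState n) :=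
  (Complex.I * x.1) • 1 + ∑ j, qubitOp j (x.2 j)

lemma dPhi_eq_localOp (ψ : QState n) (x : GV n) : dPhi ψ x = localOp x ψ := by
  funext I
  simp [dPhi, localOp, qubitOp_apply]

lemma localOp_lie (x y : GV n) :
    localOp ⁅x, y⁆ = localOp x * localOp y - localOp y * localOp x := by
  set A := ∑ j, qubitOp j (x.2 j)
  set B := ∑ j, qubitOp j (y.2 j)
  have hscalar : ∀ a b : ℂ, (a • 1 + A) * (b • 1 + B) - (b • 1 + B) * (a • 1 + A) =
      A * B - B * A := fun a b => by
    simp only [add_mul, mul_add, smul_add, smul_mul_assoc, mul_smul_comm, one_mul, mul_one,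
      smul_smul, mul_comm a b]
    abel
  have hdiag : ∀ j, ∑ k, (qubitOp j (x.2 j) * qubitOp k (y.2 k) -
      qubitOp k (y.2 k) * qubitOp j (x.2 j)) = qubitOp j ((⁅x, y⁆ : GV n).2 j) := fun j => by
    rw [Finset.sum_eq_single j (fun k _ hkj => by rw [qubitOp_mul_qubitOp_of_ne hkj.symm,
      sub_self]) (by simp), qubitOp_mul_qubitOp, qubitOp_mul_qubitOp, ← qubitOp_sub]
    rfl
  have hAB : A * B - B * A = ∑ j, qubitOp j ((⁅x, y⁆ : GV n).2 j) := by
    rw [Finset.sum_mul_sum, Finset.sum_mul_sum,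
      Finset.sum_comm (f := fun k j => qubitOp k (y.2 k) * qubitOp j (x.2 j)),
      ← Finset.sum_sub_distrib]
    simp only [← Finset.sum_sub_distrib, hdiag]
  rw [localOp, localOp, localOp, hscalar, hAB, GV.fst_lie, Complex.ofReal_zero, mul_zero,
    zero_smul, zero_add]

lemma lie_mem_stab {ψ : QState n} {x y : GV n} (hx : x ∈ stab ψ) (hy : y ∈ stab ψ) :
    ⁅x, y⁆ ∈ stab ψ := by
  refine ⟨Submodule.mem_prod.2 ⟨trivial, fun j _ => su2_lie_mem (hx.1.2 j trivial)
    (hy.1.2 j trivial)⟩, ?_⟩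
  have hx' : localOp x ψ = 0 := (dPhi_eq_localOp ψ x).symm.trans hx.2
  have hy' : localOp y ψ = 0 := (dPhi_eq_localOp ψ y).symm.trans hy.2
  change dPhi ψ ⁅x, y⁆ = 0
  rw [dPhi_eq_localOp, localOp_lie, LinearMap.sub_apply, Module.End.mul_apply,
    Module.End.mul_apply, hx', hy', map_zero, map_zero, sub_zero]

end LocalAction

section FrobeniusForm

open scoped ComplexOrder

lemma Matrix.trace_conjTranspose_lie_mul {m R : Type*} [Fintype m] [CommRing R] [StarRing R]
    {S : Matrix m m R} (hS : Sᴴ = -S) (X Y : Matrix m m R) :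
    (⁅S, X⁆ᴴ * Y).trace = -(Xᴴ * ⁅S, Y⁆).trace := by
  rw [Ring.lie_def, Ring.lie_def, Matrix.conjTranspose_sub, Matrix.conjTranspose_mul,
    Matrix.conjTranspose_mul, hS]
  simp only [Matrix.neg_mul, Matrix.mul_neg, Matrix.sub_mul, Matrix.mul_sub, Matrix.trace_sub,
    Matrix.trace_neg, Matrix.mul_assoc]
  rw [Matrix.trace_mul_comm S]
  simp only [Matrix.mul_assoc]
  ring

lemma Matrix.re_trace_conjTranspose_mul_self_nonneg {m : Type*} [Fintype m]
    (A : Matrix m m ℂ) : 0 ≤ (Aᴴ * A).trace.re :=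
  (Complex.nonneg_iff.1 (Matrix.posSemidef_conjTranspose_mul_self A).trace_nonneg).1

lemma Matrix.eq_zero_of_re_trace_conjTranspose_mul_self {m : Type*} [Fintype m]
    {A : Matrix m m ℂ} (h : (Aᴴ * A).trace.re = 0) : A = 0 := by
  have him := (Complex.nonneg_iff.1 (Matrix.posSemidef_conjTranspose_mul_self A).trace_nonneg).2
  exact Matrix.trace_conjTranspose_mul_self_eq_zero_iff.1 (Complex.ext h him.symm)

variable {n : ℕ}

def gForm : LinearMap.BilinForm ℝ (GV n) :=
  LinearMap.mk₂ ℝ (fun x y => x.1 * y.1 + ∑ k, ((x.2 k)ᴴ * y.2 k).trace.re)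
    (fun x x' y => by
      simp only [Prod.fst_add, Prod.snd_add, Pi.add_apply, Matrix.conjTranspose_add,
        Matrix.add_mul, Matrix.trace_add, Complex.add_re, Finset.sum_add_distrib]
      ring)
    (fun r x y => by
      simp only [Prod.smul_fst, Prod.smul_snd, Pi.smul_apply, Matrix.conjTranspose_smul,
        star_trivial, Matrix.smul_mul, Matrix.trace_smul, Complex.smul_re, smul_eq_mul,
        mul_add, Finset.mul_sum]
      ring)
    (fun x y y' => by
      simp only [Prod.fst_add, Prod.snd_add, Pi.add_apply, Matrix.mul_add, Matrix.trace_add,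
        Complex.add_re, Finset.sum_add_distrib]
      ring)
    (fun r x y => by
      simp only [Prod.smul_fst, Prod.smul_snd, Pi.smul_apply, Matrix.mul_smul,
        Matrix.trace_smul, Complex.smul_re, smul_eq_mul, mul_add, Finset.mul_sum]
      ring)

lemma gForm_apply (x y : GV n) :
    gForm x y = x.1 * y.1 + ∑ k, ((x.2 k)ᴴ * y.2 k).trace.re := rfl

lemma gForm_isSymm : (gForm (n := n)).IsSymm := by
  refine ⟨fun x y => ?_⟩
  simp only [gForm_apply, mul_comm x.1]
  congr 1
  refine Finset.sum_congr rfl fun k _ => ?_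
  rw [← Complex.conj_re, ← Complex.star_def, ← Matrix.trace_conjTranspose,
    Matrix.conjTranspose_mul, Matrix.conjTranspose_conjTranspose]

lemma gForm_anisotropic : ∀ x : GV n, gForm x x = 0 → x = 0 := by
  intro x hx
  rw [gForm_apply] at hx
  have hnn : ∀ k ∈ Finset.univ, 0 ≤ ((x.2 k)ᴴ * x.2 k).trace.re :=
    fun k _ => Matrix.re_trace_conjTranspose_mul_self_nonneg _
  have hsum := Finset.sum_nonneg hnn
  have h1 : x.1 = 0 := by nlinarith [mul_self_nonneg x.1]
  have h2 := (Finset.sum_eq_zero_iff_of_nonneg hnn).1 (by nlinarith [mul_self_nonneg x.1])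
  exact Prod.ext h1 (funext fun k =>
    Matrix.eq_zero_of_re_trace_conjTranspose_mul_self (h2 k (Finset.mem_univ k)))

lemma gForm_lie {s : GV n} (hs : s ∈ gSub n) (x y : GV n) :
    gForm ⁅s, x⁆ y = -gForm x ⁅s, y⁆ := by
  simp only [gForm_apply, GV.fst_lie, GV.snd_lie, zero_mul, mul_zero, zero_add,
    ← Finset.sum_neg_distrib]
  refine Finset.sum_congr rfl fun k _ => ?_
  rw [Matrix.trace_conjTranspose_lie_mul (hs.2 k trivial).1, Complex.neg_re]

end FrobeniusForm

section Stabilizer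

variable {n : ℕ} {ψ : QState n}

lemma stab_le_gSub : stab ψ ≤ gSub n := inf_le_left

lemma map_Pj_le_su2 {S : Submodule ℝ (GV n)} (hS : S ≤ gSub n) (k : Fin n) :
    S.map (Pj k) ≤ su2 := by
  rintro _ ⟨x, hx, rfl⟩
  exact (hS hx).2 k trivial

lemma gForm_lie_of_le_gSub {S : Submodule ℝ (GV n)} (hS : S ≤ gSub n) :
    ∀ s ∈ S, ∀ x y : GV n, gForm ⁅s, x⁆ y = -gForm x ⁅s, y⁆ :=
  fun _ hs => gForm_lie (hS hs)

lemma eq_zero_of_mem_stab_of_snd_eq_zero (hψ : ψ ≠ 0) {x : GV n} (hx : x ∈ stab ψ)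
    (h : x.2 = 0) : x = 0 := by
  obtain ⟨I, hI⟩ := Function.ne_iff.1 hψ
  have := congrFun hx.2 I
  simp only [dPhi, LinearMap.coe_mk, AddHom.coe_mk, h, Pi.zero_apply, applySingle,
    Matrix.zero_apply, zero_mul, Finset.sum_const_zero, add_zero, mul_eq_zero,
    Complex.I_ne_zero, Complex.ofReal_eq_zero, false_or] at this
  exact Prod.ext (this.resolve_right hI) h

lemma eq_zero_of_mem_stab_of_supported (hψ : ψ ≠ 0) {x : GV n} (hx : x ∈ stab ψ)
    (h1 : x.1 = 0) {k : Fin n} (hk : ∀ m, m ≠ k → x.2 m = 0) : x = 0 := by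
  obtain ⟨I, hI⟩ := Function.ne_iff.1 hψ
  set u : Fin 2 → ℂ := fun a => ψ (Function.update I k a)
  have hu : u ≠ 0 := Function.ne_iff.2 ⟨I k, by simpa [u] using hI⟩
  have hXu : x.2 k *ᵥ u = 0 := by
    funext a
    have := congrFun hx.2 (Function.update I k a)
    rw [dPhi_eq_localOp, localOp, h1, Complex.ofReal_zero, mul_zero, zero_smul, zero_add,
      Finset.sum_eq_single k (fun m _ hm => by rw [hk m hm]; ext; simp [qubitOp_apply,
      applySingle]) (by simp)] at this
    simpa [qubitOp_apply, applySingle, Matrix.mulVec, dotProduct, u] using this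
  refine eq_zero_of_mem_stab_of_snd_eq_zero hψ hx (funext fun m => ?_)
  rcases eq_or_ne m k with rfl | hm
  · exact su2_eq_zero_of_mulVec_eq_zero (hx.1.2 m trivial) hu hXu
  · exact hk m hm

lemma finrank_le_sum_finrank_map_Pj (hψ : ψ ≠ 0) {W : Submodule ℝ (GV n)} (hW : W ≤ stab ψ) :
    finrank ℝ W ≤ ∑ k, finrank ℝ (W.map (Pj k)) := by
  let f : W →ₗ[ℝ] ∀ k, W.map (Pj k) := LinearMap.pi fun k => (Pj k).submoduleMap W
  have hf : Function.Injective f := by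
    refine (injective_iff_map_eq_zero f).2 fun x hx => Subtype.ext ?_
    refine eq_zero_of_mem_stab_of_snd_eq_zero hψ (hW x.2) (funext fun k => ?_)
    exact congrArg Subtype.val (congrFun hx k)
  exact (LinearMap.finrank_le_finrank_of_injective hf).trans (finrank_pi_fintype ℝ).le

open Classical in
def activeQubits (S : Submodule ℝ (GV n)) : Finset (Fin n) :=
  Finset.univ.filter fun k => S.map (Pj k) ≠ ⊥

lemma mem_activeQubits {S : Submodule ℝ (GV n)} {k : Fin n} :
    k ∈ activeQubits S ↔ S.map (Pj k) ≠ ⊥ := by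
  classical
  simp [activeQubits]

lemma notMem_activeQubits {S : Submodule ℝ (GV n)} {k : Fin n} :
    k ∉ activeQubits S ↔ ∀ x ∈ S, x.2 k = 0 := by
  rw [mem_activeQubits, not_not, ← LinearMap.le_ker_iff_map]
  rfl

lemma activeQubits_mono {S T : Submodule ℝ (GV n)} (h : S ≤ T) :
    activeQubits S ⊆ activeQubits T := fun _ hk => by
  rw [mem_activeQubits] at hk ⊢
  exact ne_bot_of_le_ne_bot hk (Submodule.map_mono h)

end Stabilizer

section CenterFree

variable {n : ℕ} {ψ : QState n} {S : Submodule ℝ (GV n)}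

lemma fst_eq_zero_of_isCenterFree (hSg : S ≤ gSub n) (hS : S.IsLieClosed)
    (hSc : S.IsCenterFree) {x : GV n} (hx : x ∈ S) : x.1 = 0 :=
  hSc.le_ker_of_lie hS gForm_isSymm gForm_anisotropic (gForm_lie_of_le_gSub hSg)
    (LinearMap.fst ℝ ℝ _) (fun x _ y _ => GV.fst_lie x y) hx

lemma two_le_finrank_map_Pj (hSg : S ≤ gSub n) (hS : S.IsLieClosed) (hSc : S.IsCenterFree)
    {k : Fin n} (hk : k ∈ activeQubits S) : 2 ≤ finrank ℝ (S.map (Pj k)) := by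
  by_contra! h
  refine mem_activeQubits.1 hk (LinearMap.le_ker_iff_map.1 ?_)
  exact hSc.le_ker_of_lie hS gForm_isSymm gForm_anisotropic (gForm_lie_of_le_gSub hSg)
    (Pj k) fun x hx y hy => Submodule.lie_eq_zero_of_finrank_le_one (V := S.map (Pj k)) (by omega)
      ⟨x, hx, rfl⟩ ⟨y, hy, rfl⟩

lemma disjoint_activeQubits_of_lie_eq_zero (hSg : S ≤ gSub n) (hS : S.IsLieClosed)
    (hSc : S.IsCenterFree) {T : Submodule ℝ (GV n)} (hTg : T ≤ gSub n)
    (hTS : ∀ z ∈ T, ∀ s ∈ S, ⁅z, s⁆ = 0) : Disjoint (activeQubits S) (activeQubits T) := by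
  refine Finset.disjoint_left.2 fun k hk => notMem_activeQubits.2 fun z hz => ?_
  refine su2_eq_zero_of_lie_eq_zero (map_Pj_le_su2 hSg k)
    (two_le_finrank_map_Pj hSg hS hSc hk) ((hTg hz).2 k trivial) ?_
  rintro _ ⟨s, hs, rfl⟩
  exact congrFun (congrArg Prod.snd (hTS z hz s hs)) k

lemma finrank_le_card_activeQubits (hψ : ψ ≠ 0) {Z : Submodule ℝ (GV n)} (hZ : Z ≤ stab ψ)
    (hZc : ∀ x ∈ Z, ∀ y ∈ Z, ⁅x, y⁆ = 0) : finrank ℝ Z ≤ (activeQubits Z).card := by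
  calc finrank ℝ Z ≤ ∑ k, finrank ℝ (Z.map (Pj k)) := finrank_le_sum_finrank_map_Pj hψ hZ
    _ = ∑ k ∈ activeQubits Z, finrank ℝ (Z.map (Pj k)) :=
      (Finset.sum_subset (Finset.subset_univ _) fun k _ hk => by
        rw [mem_activeQubits, not_not] at hk
        rw [hk, finrank_bot]).symm
    _ ≤ ∑ k ∈ activeQubits Z, 1 := Finset.sum_le_sum fun k _ =>
      finrank_le_one_of_lie_eq_zero (map_Pj_le_su2 (hZ.trans stab_le_gSub) k)
        (by
          rintro _ ⟨x, hx, rfl⟩ _ ⟨y, hy, rfl⟩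
          exact congrFun (congrArg Prod.snd (hZc x hx y hy)) k)
    _ = (activeQubits Z).card := by simp

end CenterFree

section SemisimplePart

variable {n : ℕ} {ψ : QState n} {I S : Submodule ℝ (GV n)}

lemma disjoint_ker_Pj_of_minimal (hI : I.IsLieIdealOf S)
    (hmin : ∀ J : Submodule ℝ (GV n), J.IsLieIdealOf S → J ≤ I → J = ⊥ ∨ J = I)
    {k : Fin n} (hk : k ∈ activeQubits I) : Disjoint I (LinearMap.ker (Pj k)) := by
  have hJ : (I ⊓ LinearMap.ker (Pj k)).IsLieIdealOf S := hI.inf_ker (Pj k) fun s _ x _ hx => by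
    change ⁅s.2 k, x.2 k⁆ = 0
    rw [show x.2 k = 0 from hx, lie_zero]
  rcases hmin _ hJ inf_le_left with h | h
  · exact disjoint_iff.2 h
  · exact absurd (LinearMap.le_ker_iff_map.1 (h ▸ inf_le_right)) (mem_activeQubits.1 hk)

lemma finrank_le_three_of_minimal (hI : I.IsLieIdealOf S) (hIg : I ≤ gSub n)
    (hmin : ∀ J : Submodule ℝ (GV n), J.IsLieIdealOf S → J ≤ I → J = ⊥ ∨ J = I)
    {k : Fin n} (hk : k ∈ activeQubits I) : finrank ℝ I ≤ 3 := by
  have hinj := LinearMap.injective_domRestrict_iff.2 (disjoint_ker_Pj_of_minimal hI hmin hk)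
  rw [← LinearMap.finrank_range_of_inj hinj, LinearMap.range_domRestrict]
  exact (Submodule.finrank_mono (map_Pj_le_su2 hIg k)).trans finrank_su2_le

lemma two_le_card_activeQubits (hψ : ψ ≠ 0) (hI : I ≤ stab ψ) (hI1 : ∀ x ∈ I, x.1 = 0)
    (hI0 : I ≠ ⊥) : 2 ≤ (activeQubits I).card := by
  obtain ⟨z, hz, hz0⟩ := (Submodule.ne_bot_iff I).1 hI0
  by_contra! hcard
  have hz2 : z.2 ≠ 0 := fun h => hz0 (Prod.ext (hI1 z hz) h)
  obtain ⟨k, hk⟩ := Function.ne_iff.1 hz2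
  have hk_act : k ∈ activeQubits I := by
    by_contra h
    exact hk (notMem_activeQubits.1 h z hz)
  refine hz0 (eq_zero_of_mem_stab_of_supported hψ (hI hz) (hI1 z hz) (k := k) fun m hm => ?_)
  by_contra hm0
  have hm_act : m ∈ activeQubits I := by
    by_contra h
    exact hm0 (notMem_activeQubits.1 h z hz)
  exact hm (Finset.card_le_one.1 (by omega) m hm_act k hk_act)

theorem two_mul_finrank_le_of_isCenterFree (hψ : ψ ≠ 0) (hSψ : S ≤ stab ψ)
    (hS : S.IsLieClosed) (hSc : S.IsCenterFree) :
    2 * finrank ℝ S ≤ 3 * (activeQubits S).card := by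
  induction hd : finrank ℝ S using Nat.strong_induction_on generalizing S with
  | _ d ih =>
  subst hd
  rcases eq_or_ne S ⊥ with rfl | hS0
  · simp
  have hSg := hSψ.trans stab_le_gSub
  obtain ⟨I, hI, hI0, hmin⟩ := Submodule.exists_minimal_isLieIdealOf hS hS0
  set I' := S ⊓ gForm.orthogonal I
  have hI' : I'.IsLieIdealOf S := hI.inf_orthogonal hS (gForm_lie_of_le_gSub hSg)
  have hdisj : Disjoint I I' :=
    (gForm.disjoint_orthogonal_of_anisotropic gForm_anisotropic I).mono_right inf_le_right
  have hsup : I ⊔ I' = S := gForm.sup_inf_orthogonal gForm_isSymm gForm_anisotropic hI.le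
  have hdim : finrank ℝ I + finrank ℝ I' = finrank ℝ S :=
    gForm.finrank_add_finrank_inf_orthogonal gForm_isSymm gForm_anisotropic hI.le
  have hIc : I.IsCenterFree := hSc.of_sup_eq hI hI' hdisj hsup
  have hI'c : I'.IsCenterFree := hSc.of_sup_eq hI' hI hdisj.symm (by rw [sup_comm, hsup])
  have hIg : I ≤ gSub n := hI.le.trans hSg
  have hcard : 2 ≤ (activeQubits I).card := two_le_card_activeQubits hψ (hI.le.trans hSψ)
    (fun x hx => fst_eq_zero_of_isCenterFree hIg hI.isLieClosed hIc hx) hI0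
  obtain ⟨k, hk⟩ : (activeQubits I).Nonempty := Finset.card_pos.1 (by omega)
  have hI3 := finrank_le_three_of_minimal hI hIg hmin hk
  have hoff : Disjoint (activeQubits I) (activeQubits I') :=
    disjoint_activeQubits_of_lie_eq_zero hIg hI.isLieClosed hIc (hI'.le.trans hSg)
      fun _ hz _ hs => hI'.lie_eq_zero_of_disjoint hI hdisj.symm hz hs
  have hunion := Finset.card_le_card (Finset.union_subset (activeQubits_mono hI.le)
    (activeQubits_mono hI'.le))
  rw [Finset.card_union_of_disjoint hoff] at hunion
  have hIpos : 0 < finrank ℝ I := Nat.pos_of_ne_zero fun h => hI0 (Submodule.finrank_eq_zero.1 h)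
  have := ih _ (by omega) (hI'.le.trans hSψ) hI'.isLieClosed hI'c rfl
  omega

end SemisimplePart

theorem stmt12_general {n : ℕ} (ψ : QState n) (hψ : ψ ≠ 0) :
    2 * Module.finrank ℝ ↥(stab ψ) ≤ 3 * n := by
  set K := stab ψ
  have hK : K.IsLieClosed := fun _ hx _ hy => lie_mem_stab hx hy
  have hKg : K ≤ gSub n := stab_le_gSub
  set Z := K.lieCenter
  set S := K ⊓ gForm.orthogonal Z
  have hS : S.IsLieIdealOf K :=
    K.lieCenter_isLieIdealOf.inf_orthogonal hK (gForm_lie_of_le_gSub hKg)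
  have hSc : S.IsCenterFree := Submodule.isCenterFree_inf_orthogonal_lieCenter hK gForm_isSymm
    gForm_anisotropic (gForm_lie_of_le_gSub hKg)
  have hdim : finrank ℝ Z + finrank ℝ S = finrank ℝ K :=
    gForm.finrank_add_finrank_inf_orthogonal gForm_isSymm gForm_anisotropic
      K.lieCenter_isLieIdealOf.le
  have hS_bound := two_mul_finrank_le_of_isCenterFree hψ hS.le hS.isLieClosed hSc
  have hZ_bound : finrank ℝ Z ≤ (activeQubits Z).card :=
    finrank_le_card_activeQubits hψ (fun _ hx => hx.1) fun x hx y hy => hx.2 y hy.1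
  have hoff : Disjoint (activeQubits S) (activeQubits Z) :=
    disjoint_activeQubits_of_lie_eq_zero (hS.le.trans hKg) hS.isLieClosed hSc
      (fun _ hx => hKg hx.1) fun z hz s hs => hz.2 s hs.1
  have hn := Finset.card_le_univ (activeQubits S ∪ activeQubits Z)
  rw [Finset.card_union_of_disjoint hoff, Fintype.card_fin] at hn
  omega

/-- Maximum stabilizer dimension: for every nonzero `n`-qubit state `ψ`,
`2 · dim K_ψ ≤ 3n`, i.e. `dim K_ψ ≤ 3n/2`. -/
theorem stmt12 {n : ℕ} (hn : 1 ≤ n) (ψ : QState n) (hψ : ψ ≠ 0) :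
    2 * Module.finrank ℝ ↥(stab ψ) ≤ 3 * n :=
  stmt12_general ψ hψ
end
end

section
/- For n ≥ 3, the stabilizer subalgebra of the generalized n-qubit GHZ state ψ (with α, β nonzero) is exactly K_ψ = { (0, X) ∈ g : there exists t : Fin n → ℝ with X j = t_j · A for every qubit j and Σ_j t_j = 0 }, where A = diag(i, −i). -/
open scoped Matrix

noncomputable section

section GhzAux

variable {n : ℕ}

lemma fin2_cases (a : Fin 2) : a = 0 ∨ a = 1 := by fin_cases a <;> simp

lemma smul_matA_apply (c : ℝ) (a b : Fin 2) : (c • matA) a b = (c : ℂ) * matA a b := by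
  rw [Matrix.smul_apply, Complex.real_smul]

lemma matA_mem_su2 : matA ∈ su2 := by
  constructor
  · ext a b
    fin_cases a <;> fin_cases b <;>
      simp [matA, Matrix.conjTranspose_apply, Complex.conj_I]
  · simp [Matrix.trace_fin_two, matA]

lemma ghz_all_zero (α β : ℂ) : ghz n α β (fun _ => 0) = α := by simp [ghz]

lemma ghz_all_one (hn : 0 < n) (α β : ℂ) : ghz n α β (fun _ => 1) = β := by
  rw [ghz, if_neg, if_pos (fun _ => rfl)]
  intro h
  exact absurd (h ⟨0, hn⟩) (by decide)

lemma ghz_eq_zero (α β : ℂ) {I : Fin n → Fin 2} (h0 : ¬ ∀ j, I j = 0)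
    (h1 : ¬ ∀ j, I j = 1) : ghz n α β I = 0 := by
  simp [ghz, h0, h1]

lemma exists_ne_ne (hn : 3 ≤ n) (j j' : Fin n) : ∃ k : Fin n, k ≠ j ∧ k ≠ j' := by
  have h2 : ({j, j'} : Finset (Fin n)).card ≤ 2 := by
    refine le_trans (Finset.card_insert_le _ _) ?_
    simp
  have hpos : 0 < ({j, j'}ᶜ : Finset (Fin n)).card := by
    rw [Finset.card_compl, Fintype.card_fin]
    omega
  obtain ⟨k, hk⟩ := Finset.card_pos.mp hpos
  simp only [Finset.mem_compl, Finset.mem_insert, Finset.mem_singleton, not_or] at hk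
  exact ⟨k, hk.1, hk.2⟩

lemma dPhi_apply (ψ : QState n) (x : GV n) (I : Fin n → Fin 2) :
    dPhi ψ x I = Complex.I * (x.1 : ℂ) * ψ I
      + ∑ j, (x.2 j (I j) 0 * ψ (Function.update I j 0)
              + x.2 j (I j) 1 * ψ (Function.update I j 1)) := by
  simp [dPhi, applySingle, Fin.sum_univ_two]

end GhzAux

/-- For `n ≥ 3`, the stabilizer subalgebra of the generalized `n`-qubit
GHZ state (with `α, β ≠ 0`) is exactly
`{(0, X) : ∃ t : Fin n → ℝ, X j = t_j • A for every j and Σ_j t_j = 0}`. -/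
theorem stmt17 {n : ℕ} (hn : 3 ≤ n) (α β : ℂ) (hα : α ≠ 0) (hβ : β ≠ 0) :
    ∀ x : GV n, x ∈ stab (ghz n α β) ↔
      (x.1 = 0 ∧ ∃ t : Fin n → ℝ, (∀ j, x.2 j = t j • matA) ∧ ∑ j, t j = 0) := by
  intro x
  have hn0 : 0 < n := by omega
  set ψ : QState n := ghz n α β with hψdef
  have hupd1 : ∀ j : Fin n, ψ (Function.update (fun _ => (0 : Fin 2)) j 1) = 0 := by
    intro j
    apply ghz_eq_zero
    · intro h
      have := h j
      simp [Function.update_self] at this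
    · intro h
      obtain ⟨k, hk, -⟩ := exists_ne_ne hn j j
      have := h k
      rw [Function.update_of_ne hk] at this
      exact absurd this (by decide)
  constructor
  · intro hx
    obtain ⟨hg, hker⟩ := Submodule.mem_inf.mp hx
    have hker' : dPhi ψ x = 0 := LinearMap.mem_ker.mp hker
    obtain ⟨-, hg2⟩ := Submodule.mem_prod.mp hg
    have hsu : ∀ j : Fin n, (x.2 j)ᴴ = -(x.2 j) ∧ (x.2 j).trace = 0 :=
      fun j => Submodule.mem_pi.mp hg2 j (Set.mem_univ j)
    have key : ∀ I : Fin n → Fin 2,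
        Complex.I * (x.1 : ℂ) * ψ I
          + ∑ j, (x.2 j (I j) 0 * ψ (Function.update I j 0)
                  + x.2 j (I j) 1 * ψ (Function.update I j 1)) = 0 := by
      intro I
      rw [← dPhi_apply, hker']
      rfl
    have htr : ∀ j : Fin n, x.2 j 1 1 = -(x.2 j 0 0) := by
      intro j
      have := (hsu j).2
      rw [Matrix.trace_fin_two] at this
      linear_combination this
    have sum0 : Complex.I * (x.1 : ℂ) + ∑ j, x.2 j 0 0 = 0 := by
      have h := key (fun _ => 0)
      have hterm : ∀ j ∈ Finset.univ, x.2 j ((fun _ => (0:Fin 2)) j) 0 *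
            ψ (Function.update (fun _ => (0:Fin 2)) j 0)
          + x.2 j ((fun _ => (0:Fin 2)) j) 1 *
            ψ (Function.update (fun _ => (0:Fin 2)) j 1) = x.2 j 0 0 * α := by
        intro j _
        have hu0 : Function.update (fun _ => (0:Fin 2)) j 0 = (fun _ => 0) :=
          Function.update_eq_self j _
        rw [hu0, hupd1 j, hψdef, ghz_all_zero]
        ring
      rw [Finset.sum_congr rfl hterm, hψdef, ghz_all_zero] at h
      have h2 : (Complex.I * (x.1 : ℂ) + ∑ j, x.2 j 0 0) * α = 0 := by
        rw [add_mul, Finset.sum_mul]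
        linear_combination h
      exact (mul_eq_zero.mp h2).resolve_right hα
    have sum1 : Complex.I * (x.1 : ℂ) - ∑ j, x.2 j 0 0 = 0 := by
      have h := key (fun _ => 1)
      have hterm : ∀ j ∈ Finset.univ, x.2 j ((fun _ => (1:Fin 2)) j) 0 *
            ψ (Function.update (fun _ => (1:Fin 2)) j 0)
          + x.2 j ((fun _ => (1:Fin 2)) j) 1 *
            ψ (Function.update (fun _ => (1:Fin 2)) j 1) = -(x.2 j 0 0) * β := by
        intro j _
        have hu1 : Function.update (fun _ => (1:Fin 2)) j 1 = (fun _ => 1) :=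
          Function.update_eq_self j _
        have hz : ψ (Function.update (fun _ => (1:Fin 2)) j 0) = 0 := by
          apply ghz_eq_zero
          · intro h'
            obtain ⟨k, hk, -⟩ := exists_ne_ne hn j j
            have := h' k
            rw [Function.update_of_ne hk] at this
            exact absurd this (by decide)
          · intro h'
            have := h' j
            simp [Function.update_self] at this
        rw [hu1, hz, hψdef, ghz_all_one hn0, htr j]
        ring
      rw [Finset.sum_congr rfl hterm, hψdef, ghz_all_one hn0] at h
      simp only [neg_mul] at h
      rw [Finset.sum_neg_distrib] at h
      have h2 : (Complex.I * (x.1 : ℂ) - ∑ j, x.2 j 0 0) * β = 0 := by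
        rw [sub_mul, Finset.sum_mul]
        linear_combination h
      exact (mul_eq_zero.mp h2).resolve_right hβ
    have ht0 : x.1 = 0 := by
      have hI : Complex.I * (x.1 : ℂ) = 0 := by linear_combination (sum0 + sum1) / 2
      have h5 : (x.1 : ℂ) = 0 :=
        (mul_eq_zero.mp hI).resolve_left Complex.I_ne_zero
      exact_mod_cast h5
    have hsum00 : ∑ j, x.2 j 0 0 = 0 := by linear_combination (sum0 - sum1) / 2
    have hoff : ∀ j : Fin n, x.2 j 1 0 = 0 := by
      intro j0
      have h := key (Function.update (fun _ => (0 : Fin 2)) j0 1)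
      set I₁ := Function.update (fun _ => (0 : Fin 2)) j0 1 with hI₁
      have hterm : ∀ j ∈ Finset.univ,
          x.2 j (I₁ j) 0 * ψ (Function.update I₁ j 0)
          + x.2 j (I₁ j) 1 * ψ (Function.update I₁ j 1)
          = if j = j0 then x.2 j0 1 0 * α else 0 := by
        intro j _
        rcases eq_or_ne j j0 with rfl | hj
        · have h1 : I₁ j = 1 := Function.update_self j 1 _
          have h2 : Function.update I₁ j 0 = (fun _ => 0) := by
            rw [hI₁, Function.update_idem]
            exact Function.update_eq_self j _
          have h3 : Function.update I₁ j 1 = I₁ := by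
            rw [hI₁, Function.update_idem]
          rw [if_pos rfl, h1, h2, h3, hupd1 j, hψdef, ghz_all_zero]
          ring
        · have h1 : I₁ j = 0 := Function.update_of_ne hj _ _
          have h2 : Function.update I₁ j 0 = I₁ := by
            conv_lhs => rw [← h1]
            exact Function.update_eq_self j _
          have h3 : ψ (Function.update I₁ j 1) = 0 := by
            apply ghz_eq_zero
            · intro h'
              have := h' j
              simp [Function.update_self] at this
            · intro h'
              obtain ⟨k, hk, hk0⟩ := exists_ne_ne hn j j0
              have := h' k
              rw [Function.update_of_ne hk, hI₁, Function.update_of_ne hk0] at this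
              exact absurd this (by decide)
          rw [if_neg hj, h1, h2, h3, hI₁, hupd1 j0]
          ring
      rw [Finset.sum_congr rfl hterm, Finset.sum_ite_eq' Finset.univ j0,
        if_pos (Finset.mem_univ j0), hI₁, hupd1 j0] at h
      have h2 : x.2 j0 1 0 * α = 0 := by linear_combination h
      exact (mul_eq_zero.mp h2).resolve_right hα
    refine ⟨ht0, fun j => (x.2 j 0 0).im, fun j => ?_, ?_⟩
    · have hH := (hsu j).1
      have hd : (starRingEnd ℂ) (x.2 j 0 0) = -(x.2 j 0 0) := by
        have := congrFun (congrFun hH 0) 0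
        simpa [Matrix.conjTranspose_apply] using this
      have hre : (x.2 j 0 0).re = 0 := by
        have := congrArg Complex.re hd
        simp at this
        linarith
      have h00 : x.2 j 0 0 = ((x.2 j 0 0).im : ℂ) * Complex.I := by
        apply Complex.ext <;> simp [hre]
      have h01 : x.2 j 0 1 = 0 := by
        have := congrFun (congrFun hH 1) 0
        simpa [Matrix.conjTranspose_apply, hoff j] using this
      ext a b
      fin_cases a <;> fin_cases b
      · show x.2 j 0 0 = ((x.2 j 0 0).im • matA) 0 0
        rw [smul_matA_apply]
        exact h00
      · show x.2 j 0 1 = ((x.2 j 0 0).im • matA) 0 1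
        rw [smul_matA_apply, show matA 0 1 = 0 from rfl, mul_zero]
        exact h01
      · show x.2 j 1 0 = ((x.2 j 0 0).im • matA) 1 0
        rw [smul_matA_apply, show matA 1 0 = 0 from rfl, mul_zero]
        exact hoff j
      · show x.2 j 1 1 = ((x.2 j 0 0).im • matA) 1 1
        rw [smul_matA_apply, show matA 1 1 = -Complex.I from rfl, htr j]
        conv_lhs => rw [h00]
        ring
    · have := congrArg Complex.im hsum00
      rw [Complex.im_sum] at this
      simpa using this
  · rintro ⟨ht0, t, hX, hsum⟩
    rw [stab, Submodule.mem_inf]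
    constructor
    · rw [gSub, Submodule.mem_prod]
      refine ⟨trivial, Submodule.mem_pi.mpr fun j _ => ?_⟩
      rw [hX j]
      exact su2.smul_mem _ matA_mem_su2
    · rw [LinearMap.mem_ker]
      funext I
      show dPhi ψ x I = (0 : ℂ)
      rw [dPhi_apply, ht0]
      have hterm : ∀ j ∈ Finset.univ,
          x.2 j (I j) 0 * ψ (Function.update I j 0)
          + x.2 j (I j) 1 * ψ (Function.update I j 1)
          = (if I j = 0 then Complex.I else -Complex.I) * (t j : ℂ) * ψ I := by
        intro j _
        rw [hX j]
        rcases fin2_cases (I j) with hj | hj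
        · have hu : Function.update I j 0 = I := by
            conv_lhs => rw [← hj]
            exact Function.update_eq_self j I
          rw [hj, if_pos rfl, hu, smul_matA_apply, smul_matA_apply,
            show matA 0 0 = Complex.I from rfl, show matA 0 1 = 0 from rfl]
          ring
        · have hu : Function.update I j 1 = I := by
            conv_lhs => rw [← hj]
            exact Function.update_eq_self j I
          rw [hj, if_neg (by decide), hu, smul_matA_apply, smul_matA_apply,
            show matA 1 0 = 0 from rfl, show matA 1 1 = -Complex.I from rfl]
          ring
      rw [Finset.sum_congr rfl hterm]
      by_cases h0 : ∀ k : Fin n, I k = 0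
      · have hs : ∑ j, (if I j = 0 then Complex.I else -Complex.I) * (t j : ℂ) * ψ I
            = (Complex.I * ψ I) * ∑ j, (t j : ℂ) := by
          rw [Finset.mul_sum]
          exact Finset.sum_congr rfl fun j _ => by rw [if_pos (h0 j)]; ring
        rw [hs, ← Complex.ofReal_sum, hsum]
        simp
      · by_cases h1 : ∀ k : Fin n, I k = 1
        · have hs : ∑ j, (if I j = 0 then Complex.I else -Complex.I) * (t j : ℂ) * ψ I
              = (-Complex.I * ψ I) * ∑ j, (t j : ℂ) := by
            rw [Finset.mul_sum]
            refine Finset.sum_congr rfl fun j _ => by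
              rw [if_neg (by rw [h1 j]; decide)]; ring
          rw [hs, ← Complex.ofReal_sum, hsum]
          simp
        · have hz : ψ I = 0 := ghz_eq_zero α β h0 h1
          rw [hz]
          simp
end
end
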